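/- There exists r₃ > 0 such that for every r ≥ r₃ and every y ∈ ℝᴺ with |y − a_r| = r/2, one has ⟨β(Ψ_y), y⟩ > 0, where Ψ_y = f_y/‖f_y‖_{L^p(ℝᴺ)}. -/

import Mathlib

open MeasureTheory Filter Metric

noncomputable section

abbrev Euc (N : ℕ) := EuclideanSpace ℝ (Fin N)

/-- The last coordinate `x_N` of a point of `ℝ^N`. -/
def lastCoe (N : ℕ) (x : Euc N) : ℝ :=
  if h : 0 < N then x ⟨N - 1, Nat.sub_lt h one_pos⟩ else 0

/-- The upper half space `ℝ₊ᴺ = {x : x_N > 0}`. -/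
def upperHalf (N : ℕ) : Set (Euc N) := {x | 0 < lastCoe N x}

/-- The unit vector in the last coordinate direction. -/
def eVecN (N : ℕ) : Euc N :=
  if h : 0 < N then EuclideanSpace.single ⟨N - 1, Nat.sub_lt h one_pos⟩ (1 : ℝ) else 0

/-- The critical fractional Sobolev exponent `2*_s = 2N/(N-2s)`. -/
def twoStar (N : ℕ) (s : ℝ) : ℝ := 2 * N / (N - 2 * s)

/-- The Gagliardo kernel `|u x - u y|² / |x-y|^{N+2s}`. -/
def fracKernel (N : ℕ) (s : ℝ) (u : Euc N → ℝ) (q : Euc N × Euc N) : ℝ :=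
  (u q.1 - u q.2) ^ 2 / ‖q.1 - q.2‖ ^ ((N : ℝ) + 2 * s)

/-- The Gagliardo seminorm (squared) `E_s(u)`. -/
def Es (N : ℕ) (s : ℝ) (u : Euc N → ℝ) : ℝ := ∫ q : Euc N × Euc N, fracKernel N s u q

/-- Membership in the fractional Sobolev space `H^s(ℝᴺ)`. -/
def memHs (N : ℕ) (s : ℝ) (u : Euc N → ℝ) : Prop :=
  MemLp u 2 (volume : Measure (Euc N)) ∧
    Integrable (fracKernel N s u) (volume : Measure (Euc N × Euc N))

/-- Squared `H^s` norm: `‖u‖_s² = ‖u‖_{L²}² + E_s(u)`. -/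
def hsNormSq (N : ℕ) (s : ℝ) (u : Euc N → ℝ) : ℝ := (∫ x, (u x) ^ 2) + Es N s u

/-- `L^p` norm `(∫ |u|^p)^{1/p}`. -/
def lpNormP (N : ℕ) (p : ℝ) (u : Euc N → ℝ) : ℝ := (∫ x, |u x| ^ p) ^ (1 / p)

/-- The ground state level `M_∞`. -/
def MinftyC (N : ℕ) (s p : ℝ) : ℝ :=
  sInf {c | ∃ u : Euc N → ℝ, memHs N s u ∧ (∫ x, |u x| ^ p) = 1 ∧ c = hsNormSq N s u}

/-- Membership in `X₀^s(Ω)`: an `H^s` function vanishing a.e. outside `Ω`. -/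
def memX0 (N : ℕ) (s : ℝ) (Ω : Set (Euc N)) (u : Euc N → ℝ) : Prop :=
  memHs N s u ∧ ∀ᵐ x : Euc N, x ∉ Ω → u x = 0

/-- `Ω` is "the half space with a hole": an open set whose closure lies in the open upper
half space, with `ℝ₊ᴺ \ Ω ⊆ B_ρ(a_r) ⊆ ℝ₊ᴺ`. -/
structure IsHalfSpaceWithHole (N : ℕ) (ρ : ℝ) (ar : Euc N) (Ω : Set (Euc N)) : Prop where
  isOpen : IsOpen Ω
  closure_subset : closure Ω ⊆ upperHalf N
  hole_subset : upperHalf N \ Ω ⊆ ball ar ρ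
  ball_subset : ball ar ρ ⊆ upperHalf N

/-- The fractional Dirichlet bilinear form. -/
def fracForm (N : ℕ) (s : ℝ) (u v : Euc N → ℝ) : ℝ :=
  ∫ q : Euc N × Euc N, (u q.1 - u q.2) * (v q.1 - v q.2) / ‖q.1 - q.2‖ ^ ((N : ℝ) + 2 * s)

/-- Weak solution of `(-Δ)^s u + u = |u|^{p-2} u` in `Ω` (`Ω = univ` for the whole space). -/
def isWeakSolution (N : ℕ) (s p : ℝ) (Ω : Set (Euc N)) (u : Euc N → ℝ) : Prop :=
  memX0 N s Ω u ∧ ∀ v : Euc N → ℝ, memX0 N s Ω v →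
    fracForm N s u v + (∫ x, u x * v x) = ∫ x, |u x| ^ (p - 2) * u x * v x

/-- `χ(t) = 1` for `t ≤ 1` and `1/t` for `t ≥ 1`. -/
def chiFun (t : ℝ) : ℝ := if t ≤ 1 then 1 else 1 / t

/-- The barycenter-type map `β(u) = ∫ u(x)² χ(|x|) x dx`. -/
def betaMap (N : ℕ) (u : Euc N → ℝ) : Euc N := ∫ x : Euc N, ((u x) ^ 2 * chiFun ‖x‖) • x

/-- The smooth radial cutoff `ξ` relative to `ρ`. -/
def IsXiCutoff (ρ : ℝ) (ξ : ℝ → ℝ) : Prop :=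
  ContDiff ℝ (⊤ : ℕ∞) ξ ∧ (∀ t, 0 ≤ ξ t ∧ ξ t ≤ 1) ∧
    (∀ t, 0 ≤ t → t ≤ ρ → ξ t = 0) ∧ ∀ t, 2 * ρ ≤ t → ξ t = 1

/-- The smooth vertical cutoff `η`. -/
def IsEtaCutoff (η : ℝ → ℝ) : Prop :=
  ContDiff ℝ (⊤ : ℕ∞) η ∧ (∀ t, 0 ≤ η t ∧ η t ≤ 1) ∧
    (∀ t, t ≤ 0 → η t = 0) ∧ ∀ t, 1 ≤ t → η t = 1

/-- `φ` is a minimizer for `M_∞`. -/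
def isMinimizer (N : ℕ) (s p : ℝ) (φ : Euc N → ℝ) : Prop :=
  memHs N s φ ∧ (∫ x, |φ x| ^ p) = 1 ∧ hsNormSq N s φ = MinftyC N s p

/-- `f_y(x) = ξ(|x - a_r|) η(x_N) φ(x - y)`. -/
def cutFun (N : ℕ) (ξ η : ℝ → ℝ) (ar : Euc N) (φ : Euc N → ℝ) (y x : Euc N) : ℝ :=
  ξ ‖x - ar‖ * η (lastCoe N x) * φ (x - y)

/-- `Ψ_y = f_y / ‖f_y‖_{L^p}`. -/
def psiFun (N : ℕ) (p : ℝ) (ξ η : ℝ → ℝ) (ar : Euc N) (φ : Euc N → ℝ) (y : Euc N) :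
    Euc N → ℝ :=
  fun x => cutFun N ξ η ar φ y x / lpNormP N p (cutFun N ξ η ar φ y)

/-- The constrained level `c_r`. -/
def crVal (N : ℕ) (s p : ℝ) (Ω : Set (Euc N)) (ar : Euc N) : ℝ :=
  sInf {c | ∃ u : Euc N → ℝ, memX0 N s Ω u ∧ (∫ x in Ω, |u x| ^ p) = 1 ∧
    betaMap N u = ar ∧ c = hsNormSq N s u}

/-- The energy functional on `X₀^s(Ω_r)`. -/
def Ifun (N : ℕ) (s p : ℝ) (Ω : Set (Euc N)) (u : Euc N → ℝ) : ℝ :=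
  (1 / 2) * hsNormSq N s u - (1 / p) * ∫ x in Ω, |u x| ^ p

/-- The limit energy functional on `H^s(ℝᴺ)`. -/
def IinfFun (N : ℕ) (s p : ℝ) (u : Euc N → ℝ) : ℝ :=
  (1 / 2) * hsNormSq N s u - (1 / p) * ∫ x, |u x| ^ p

/-- The pairing `⟨I'(u), v⟩`. -/
def Ideriv (N : ℕ) (s p : ℝ) (u v : Euc N → ℝ) : ℝ :=
  fracForm N s u v + (∫ x, u x * v x) - ∫ x, |u x| ^ (p - 2) * u x * v x

/-! Substituting `x = z + y` gives `⟨β(f_y), y⟩ = ∫ v(z)² χ(|z + y|) ⟨z + y, y⟩ dz`, where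
`v(z) = ξ(|z + y - a_r|) η((z + y)_N) φ(z)` satisfies `|v| ≤ φ`. Since `y_N ≥ r/2`, both cutoffs
equal `1` for `|z| < 1` once `r` is large, so `v = φ` on the unit ball. There the weight
`χ(|z + y|) ⟨z + y, y⟩` is at least `|y|/3`; on `B(0, |y|)` it is nonnegative, and everywhere it
is at least `-|y|`. Hence `⟨β(f_y), y⟩ ≥ |y| (∫_{B_1} φ² / 3 - ∫_{|z| ≥ |y|} φ²)`, which is
positive because `|y| ≥ r/2` and the tail of `φ² ∈ L¹` tends to `0`. Dividing `f_y` by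
`‖f_y‖_{L^p} > 0` only multiplies `β` by a positive constant.
-/

open scoped RealInnerProductSpace Topology

lemma chiFun_eq_inv_max (t : ℝ) : chiFun t = (max t 1)⁻¹ := by
  unfold chiFun
  split_ifs with h
  · simp [max_eq_right h]
  · simp [max_eq_left (not_le.1 h).le]

lemma chiFun_nonneg (t : ℝ) : 0 ≤ chiFun t := by
  rw [chiFun_eq_inv_max]
  positivity

lemma continuous_chiFun : Continuous chiFun := by
  rw [funext chiFun_eq_inv_max]
  exact (continuous_id.max continuous_const).inv₀ fun t => by positivity

lemma chiFun_mul_self_le (t : ℝ) : chiFun t * t ≤ 1 := by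
  rw [chiFun_eq_inv_max, inv_mul_le_one₀ (by positivity)]
  exact le_max_left t 1

lemma inv_le_chiFun {t c : ℝ} (hc : 1 ≤ c) (ht : t ≤ c) : c⁻¹ ≤ chiFun t := by
  rw [chiFun_eq_inv_max]
  exact inv_anti₀ (by positivity) (max_le ht hc)

section InnerWeight

variable {E : Type*} [NormedAddCommGroup E] [InnerProductSpace ℝ E]

lemma abs_chiFun_norm_mul_inner_le (x y : E) : |chiFun ‖x‖ * ⟪x, y⟫| ≤ ‖y‖ :=
  calc |chiFun ‖x‖ * ⟪x, y⟫| = chiFun ‖x‖ * |⟪x, y⟫| := by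
        rw [abs_mul, abs_of_nonneg (chiFun_nonneg _)]
    _ ≤ chiFun ‖x‖ * (‖x‖ * ‖y‖) :=
        mul_le_mul_of_nonneg_left (abs_real_inner_le_norm x y) (chiFun_nonneg _)
    _ = (chiFun ‖x‖ * ‖x‖) * ‖y‖ := by ring
    _ ≤ ‖y‖ := mul_le_of_le_one_left (norm_nonneg y) (chiFun_mul_self_le _)

lemma sq_norm_sub_norm_mul_le_inner_add (z y : E) : ‖y‖ ^ 2 - ‖z‖ * ‖y‖ ≤ ⟪z + y, y⟫ := by
  rw [inner_add_left, real_inner_self_eq_norm_sq]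
  linarith [neg_le_of_abs_le (abs_real_inner_le_norm z y)]

lemma inner_add_nonneg_of_norm_le {z y : E} (h : ‖z‖ ≤ ‖y‖) : 0 ≤ ⟪z + y, y⟫ :=
  (sub_nonneg.2 (by nlinarith [norm_nonneg y])).trans (sq_norm_sub_norm_mul_le_inner_add z y)

lemma norm_div_three_le_chiFun_mul_inner {z y : E} (hy : 2 ≤ ‖y‖) (hz : ‖z‖ < 1) :
    ‖y‖ / 3 ≤ chiFun ‖z + y‖ * ⟪z + y, y⟫ := by
  have hχ : (‖y‖ + 1)⁻¹ ≤ chiFun ‖z + y‖ :=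
    inv_le_chiFun (by linarith) ((norm_add_le z y).trans (by linarith))
  have hinner : ‖y‖ ^ 2 - ‖y‖ ≤ ⟪z + y, y⟫ := by
    nlinarith [norm_nonneg z, sq_norm_sub_norm_mul_le_inner_add z y]
  calc ‖y‖ / 3 ≤ (‖y‖ + 1)⁻¹ * (‖y‖ ^ 2 - ‖y‖) := by
        rw [inv_mul_eq_div, le_div_iff₀ (by linarith)]
        nlinarith
    _ ≤ chiFun ‖z + y‖ * ⟪z + y, y⟫ :=
        mul_le_mul hχ hinner (by nlinarith) (chiFun_nonneg _)

end InnerWeight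

lemma tendsto_setIntegral_compl_ball {X F : Type*} [PseudoMetricSpace X] [MeasurableSpace X]
    [OpensMeasurableSpace X] [NormedAddCommGroup F] [NormedSpace ℝ F] {μ : Measure X}
    {g : X → F} (hg : Integrable g μ) (x₀ : X) :
    Tendsto (fun R : ℝ => ∫ x in (ball x₀ R)ᶜ, g x ∂μ) atTop (𝓝 0) := by
  have hempty : (⋂ R : ℝ, (ball x₀ R)ᶜ) = ∅ :=
    Set.eq_empty_of_forall_notMem fun x hx =>
      Set.mem_iInter.1 hx (dist x x₀ + 1) (mem_ball.2 (lt_add_one _))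
  simpa [hempty] using tendsto_setIntegral_of_antitone (s := fun R => (ball x₀ R)ᶜ)
    (fun R => measurableSet_ball.compl)
    (fun R R' h => Set.compl_subset_compl.2 (ball_subset_ball h)) ⟨0, hg.integrableOn⟩

lemma setIntegral_pos_of_pos_on {X : Type*} [TopologicalSpace X] [MeasurableSpace X]
    [OpensMeasurableSpace X] {μ : Measure X} [μ.IsOpenPosMeasure] {g : X → ℝ} {S : Set X}
    (hS : IsOpen S) (hne : S.Nonempty) (hg : IntegrableOn g S μ) (hpos : ∀ x ∈ S, 0 < g x) :
    0 < ∫ x in S, g x ∂μ := by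
  rw [setIntegral_pos_iff_support_of_nonneg_ae
    (ae_restrict_of_forall_mem hS.measurableSet fun x hx => (hpos x hx).le) hg,
    Set.inter_eq_right.2 fun x hx => Function.mem_support.2 (hpos x hx).ne']
  exact hS.measure_pos μ hne

lemma lastCoe_eq_inner {N : ℕ} (x : Euc N) : lastCoe N x = ⟪eVecN N, x⟫ := by
  unfold lastCoe eVecN
  split_ifs <;> simp [EuclideanSpace.inner_single_left]

lemma norm_eVecN {N : ℕ} (hN : 0 < N) : ‖eVecN N‖ = 1 := by
  simp [eVecN, hN]

lemma abs_lastCoe_le_norm {N : ℕ} (x : Euc N) : |lastCoe N x| ≤ ‖x‖ := by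
  rw [lastCoe_eq_inner]
  refine (abs_real_inner_le_norm _ _).trans (mul_le_of_le_one_left (norm_nonneg x) ?_)
  unfold eVecN
  split_ifs <;> simp

lemma half_le_lastCoe {N : ℕ} (hN : 0 < N) {a y : Euc N} (ha : lastCoe N a = 0) {r : ℝ}
    (hy : ‖y - (a + r • eVecN N)‖ = r / 2) : r / 2 ≤ lastCoe N y := by
  have h := abs_lastCoe_le_norm (y - (a + r • eVecN N))
  rw [hy, lastCoe_eq_inner, inner_sub_right, inner_add_right, inner_smul_right,
    real_inner_self_eq_norm_sq, norm_eVecN hN, ← lastCoe_eq_inner, ← lastCoe_eq_inner, ha] at h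
  linarith [neg_le_of_abs_le h]

lemma betaMap_div_const {N : ℕ} (u : Euc N → ℝ) (c : ℝ) :
    betaMap N (fun x => u x / c) = (c ^ 2)⁻¹ • betaMap N u := by
  unfold betaMap
  rw [← integral_smul]
  congr 1 with x
  rw [smul_smul, div_pow, div_eq_mul_inv]
  ring_nf

section Profile

variable {N : ℕ} {φ v : Euc N → ℝ} {y : Euc N}

lemma inner_betaMap_comp_sub (hv : MemLp v 2) (y : Euc N) :
    ⟪betaMap N (fun x => v (x - y)), y⟫ = ∫ z, v z ^ 2 * (chiFun ‖z + y‖ * ⟪z + y, y⟫) := by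
  have hint : Integrable fun z => (v z ^ 2 * chiFun ‖z + y‖) • (z + y) := by
    refine hv.integrable_sq.mono' ((hv.1.pow 2).mul
      (continuous_chiFun.comp (continuous_add_const y).norm).aestronglyMeasurable |>.smul
        (continuous_add_const y).aestronglyMeasurable) (ae_of_all _ fun z => ?_)
    rw [norm_smul, Real.norm_eq_abs, abs_of_nonneg (by positivity [chiFun_nonneg ‖z + y‖]),
      mul_assoc]
    exact mul_le_of_le_one_right (sq_nonneg _) (chiFun_mul_self_le _)
  have hβ : betaMap N (fun x => v (x - y)) = ∫ z, (v z ^ 2 * chiFun ‖z + y‖) • (z + y) := by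
    unfold betaMap
    rw [← integral_add_right_eq_self _ y]
    simp only [add_sub_cancel_right]
  rw [hβ, real_inner_comm, ← integral_inner hint]
  simp only [real_inner_smul_right, real_inner_comm y, mul_assoc]

lemma indicator_ball_sub_indicator_compl_ball_le (hle : ∀ z, |v z| ≤ |φ z|)
    (heq : ∀ z ∈ ball (0 : Euc N) 1, v z = φ z) (hy : 2 ≤ ‖y‖) (z : Euc N) :
    (ball 0 1).indicator (fun z => ‖y‖ / 3 * φ z ^ 2) z
        - (ball 0 ‖y‖)ᶜ.indicator (fun z => ‖y‖ * φ z ^ 2) z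
      ≤ v z ^ 2 * (chiFun ‖z + y‖ * ⟪z + y, y⟫) := by
  have hsq : v z ^ 2 ≤ φ z ^ 2 := sq_le_sq.2 (hle z)
  by_cases hz1 : z ∈ ball (0 : Euc N) 1
  · have hzy : z ∉ (ball (0 : Euc N) ‖y‖)ᶜ :=
      fun h => h (ball_subset_ball (by linarith) hz1)
    rw [Set.indicator_of_mem hz1, Set.indicator_of_notMem hzy, sub_zero, heq z hz1, mul_comm]
    exact mul_le_mul_of_nonneg_left
      (norm_div_three_le_chiFun_mul_inner hy (mem_ball_zero_iff.1 hz1)) (sq_nonneg _)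
  rw [Set.indicator_of_notMem hz1, zero_sub]
  by_cases hzy : z ∈ ball (0 : Euc N) ‖y‖
  · rw [Set.indicator_of_notMem (Set.notMem_compl_iff.2 hzy), neg_zero]
    exact mul_nonneg (sq_nonneg _) (mul_nonneg (chiFun_nonneg _)
      (inner_add_nonneg_of_norm_le (mem_ball_zero_iff.1 hzy).le))
  · rw [Set.indicator_of_mem (Set.mem_compl hzy)]
    have hw := neg_le_of_abs_le (abs_chiFun_norm_mul_inner_le (z + y) y)
    nlinarith [sq_nonneg (v z), norm_nonneg y]

lemma norm_mul_mass_sub_tail_le_integral (hφ : MemLp φ 2) (hv : AEStronglyMeasurable v)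
    (hle : ∀ z, |v z| ≤ |φ z|) (heq : ∀ z ∈ ball (0 : Euc N) 1, v z = φ z) (hy : 2 ≤ ‖y‖) :
    ‖y‖ * ((∫ z in ball 0 1, φ z ^ 2) / 3 - ∫ z in (ball 0 ‖y‖)ᶜ, φ z ^ 2)
      ≤ ∫ z, v z ^ 2 * (chiFun ‖z + y‖ * ⟪z + y, y⟫) := by
  have hφ2 := hφ.integrable_sq
  have hint : Integrable fun z => v z ^ 2 * (chiFun ‖z + y‖ * ⟪z + y, y⟫) := by
    refine (hφ2.const_mul ‖y‖).mono' ((hv.pow 2).mul (((continuous_chiFun.comp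
      (continuous_add_const y).norm).mul ((continuous_add_const y).inner
        continuous_const)).aestronglyMeasurable)) (ae_of_all _ fun z => ?_)
    rw [norm_mul, Real.norm_eq_abs, Real.norm_eq_abs, abs_sq, mul_comm ‖y‖]
    exact mul_le_mul (sq_le_sq.2 (hle z)) (abs_chiFun_norm_mul_inner_le _ _) (abs_nonneg _)
      (sq_nonneg _)
  calc ‖y‖ * ((∫ z in ball 0 1, φ z ^ 2) / 3 - ∫ z in (ball 0 ‖y‖)ᶜ, φ z ^ 2)
      = ∫ z, ((ball 0 1).indicator (fun z => ‖y‖ / 3 * φ z ^ 2) z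
          - (ball 0 ‖y‖)ᶜ.indicator (fun z => ‖y‖ * φ z ^ 2) z) := by
        rw [integral_sub ((hφ2.const_mul _).indicator measurableSet_ball)
          ((hφ2.const_mul _).indicator measurableSet_ball.compl),
          integral_indicator measurableSet_ball, integral_indicator measurableSet_ball.compl,
          integral_const_mul, integral_const_mul]
        ring
    _ ≤ _ := integral_mono (((hφ2.const_mul _).indicator measurableSet_ball).sub
        ((hφ2.const_mul _).indicator measurableSet_ball.compl)) hint
        (indicator_ball_sub_indicator_compl_ball_le hle heq hy)

lemma inner_betaMap_comp_sub_pos (hφ : MemLp φ 2) (hv : AEStronglyMeasurable v)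
    (hle : ∀ z, |v z| ≤ |φ z|) (heq : ∀ z ∈ ball (0 : Euc N) 1, v z = φ z) (hy : 2 ≤ ‖y‖)
    (htail : ∫ z in (ball 0 ‖y‖)ᶜ, φ z ^ 2 < (∫ z in ball 0 1, φ z ^ 2) / 3) :
    0 < ⟪betaMap N (fun x => v (x - y)), y⟫ := by
  rw [inner_betaMap_comp_sub (hφ.of_le hv (ae_of_all _ fun z => hle z)) y]
  exact (mul_pos (by linarith) (sub_pos.2 htail)).trans_le
    (norm_mul_mass_sub_tail_le_integral hφ hv hle heq hy)

lemma lpNormP_comp_sub_pos {p : ℝ} (hp : 0 < p) (hφ : Integrable fun z => |φ z| ^ p)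
    (hv : AEStronglyMeasurable v) (hle : ∀ z, |v z| ≤ |φ z|)
    (hne : ∀ z ∈ ball (0 : Euc N) 1, v z ≠ 0) (y : Euc N) :
    0 < lpNormP N p (fun x => v (x - y)) := by
  unfold lpNormP
  rw [integral_sub_right_eq_self (fun z => |v z| ^ p) y]
  have hint : Integrable fun z => |v z| ^ p :=
    hφ.mono ((Real.continuous_rpow_const hp.le).comp_aestronglyMeasurable hv.norm)
      (ae_of_all _ fun z => by
        simp only [Real.norm_eq_abs, abs_of_nonneg (Real.rpow_nonneg (abs_nonneg _) _)]
        exact Real.rpow_le_rpow (abs_nonneg _) (hle z) hp.le)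
  refine Real.rpow_pos_of_pos ?_ _
  calc 0 < ∫ z in ball 0 1, |v z| ^ p := setIntegral_pos_of_pos_on isOpen_ball
        ⟨0, mem_ball_self one_pos⟩ hint.integrableOn
        fun z hz => Real.rpow_pos_of_pos (abs_pos.2 (hne z hz)) _
    _ ≤ ∫ z, |v z| ^ p :=
        setIntegral_le_integral hint (ae_of_all _ fun z => Real.rpow_nonneg (abs_nonneg _) _)

end Profile

section Cutoff

variable {ρ : ℝ} {ξ η : ℝ → ℝ}

lemma abs_cutoff_mul_le (hξ : IsXiCutoff ρ ξ) (hη : IsEtaCutoff η) (s t x : ℝ) :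
    |ξ s * η t * x| ≤ |x| := by
  rw [abs_mul, abs_of_nonneg (mul_nonneg (hξ.2.1 s).1 (hη.2.1 t).1)]
  exact mul_le_of_le_one_left (abs_nonneg x) (mul_le_one₀ (hξ.2.1 s).2 (hη.2.1 t).1 (hη.2.1 t).2)

lemma aestronglyMeasurable_cutoff_mul (hξ : IsXiCutoff ρ ξ) (hη : IsEtaCutoff η) {N : ℕ}
    {φ : Euc N → ℝ} (hφ : AEStronglyMeasurable φ) (y b : Euc N) :
    AEStronglyMeasurable fun z => ξ ‖z + y - b‖ * η (lastCoe N (z + y)) * φ z := by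
  refine ((hξ.1.continuous.comp ((continuous_add_const y).sub continuous_const).norm).mul
    (hη.1.continuous.comp ?_)).aestronglyMeasurable.mul hφ
  simpa only [funext lastCoe_eq_inner] using continuous_const.inner (continuous_add_const y)

lemma cutoff_eq_one_of_mem_ball (hξ : IsXiCutoff ρ ξ) (hη : IsEtaCutoff η) {N : ℕ} (hN : 0 < N)
    {a y z : Euc N} (ha : lastCoe N a = 0) {r : ℝ} (hr : 4 ≤ r) (hρr : 4 * ρ + 2 ≤ r)
    (hy : ‖y - (a + r • eVecN N)‖ = r / 2) (hz : z ∈ ball (0 : Euc N) 1) :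
    ξ ‖z + y - (a + r • eVecN N)‖ * η (lastCoe N (z + y)) = 1 := by
  have hz1 := mem_ball_zero_iff.1 hz
  have hdist := norm_sub_le (z + y - (a + r • eVecN N)) z
  rw [show z + y - (a + r • eVecN N) - z = y - (a + r • eVecN N) by abel, hy] at hdist
  have hlast : lastCoe N (z + y) = lastCoe N z + lastCoe N y := by
    simp only [lastCoe_eq_inner, inner_add_right]
  rw [hξ.2.2.2 _ (by linarith), hη.2.2.2 _ (by
    linarith [neg_le_of_abs_le (abs_lastCoe_le_norm z), half_le_lastCoe hN ha hy]), one_mul]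

end Cutoff

open scoped RealInnerProductSpace in
theorem beta_psi_inner_pos_general (N : ℕ) (s p : ℝ)
    (hs : s ∈ Set.Ioo (0 : ℝ) 1) (hN : 2 * s < N)
    (hp : p ∈ Set.Ioo (2 : ℝ) (twoStar N s))
    (ρ : ℝ) (a : Euc N) (ha : lastCoe N a = 0)
    (ξ η : ℝ → ℝ) (hξ : IsXiCutoff ρ ξ) (hη : IsEtaCutoff η)
    (φ : Euc N → ℝ) (hφ : isMinimizer N s p φ)
    (hpos : ∀ x, 0 < φ x) :
    ∃ r₃ > (0 : ℝ), ∀ r ≥ r₃, ∀ y : Euc N, ‖y - (a + r • eVecN N)‖ = r / 2 →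
      0 < ⟪betaMap N (psiFun N p ξ η (a + r • eVecN N) φ y), y⟫ := by
  obtain ⟨⟨hφ2, -⟩, hφp, -⟩ := hφ
  have hN0 : 0 < N := by exact_mod_cast (by linarith [hs.1] : (0 : ℝ) < N)
  have hmass : 0 < ∫ z in ball (0 : Euc N) 1, φ z ^ 2 := setIntegral_pos_of_pos_on isOpen_ball
    ⟨0, mem_ball_self one_pos⟩ hφ2.integrable_sq.integrableOn fun z _ => pow_pos (hpos z) 2
  obtain ⟨R₀, htail⟩ := eventually_atTop.1 ((tendsto_setIntegral_compl_ball
    hφ2.integrable_sq 0).eventually_lt_const (div_pos hmass three_pos))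
  refine ⟨max (max 4 (4 * ρ + 2)) (2 * R₀), by positivity, fun r hr y hy => ?_⟩
  simp only [ge_iff_le, max_le_iff] at hr
  have hy_norm : r / 2 ≤ ‖y‖ := (half_le_lastCoe hN0 ha hy).trans
    ((le_abs_self _).trans (abs_lastCoe_le_norm y))
  set v : Euc N → ℝ := fun z =>
    ξ ‖z + y - (a + r • eVecN N)‖ * η (lastCoe N (z + y)) * φ z
  have hf : cutFun N ξ η (a + r • eVecN N) φ y = fun x => v (x - y) := by
    funext x; simp [cutFun, v]
  have hv : AEStronglyMeasurable v := aestronglyMeasurable_cutoff_mul hξ hη hφ2.1 _ _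
  have hle : ∀ z, |v z| ≤ |φ z| := fun z => abs_cutoff_mul_le hξ hη _ _ _
  have heq : ∀ z ∈ ball (0 : Euc N) 1, v z = φ z := fun z hz => by
    simp only [v, cutoff_eq_one_of_mem_ball hξ hη hN0 ha hr.1.1 hr.1.2 hy hz, one_mul]
  have hK := lpNormP_comp_sub_pos (p := p) (by linarith [hp.1])
    (Integrable.of_integral_ne_zero (by rw [hφp]; exact one_ne_zero)) hv hle
    (fun z hz => heq z hz ▸ (hpos z).ne') y
  unfold psiFun
  rw [hf, betaMap_div_const, inner_smul_left]
  exact mul_pos (inv_pos.2 (pow_pos hK 2))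
    (inner_betaMap_comp_sub_pos hφ2 hv hle heq (by linarith) (htail _ (by linarith)))

open scoped RealInnerProductSpace in
/-- `⟨β(Ψ_y), y⟩ > 0` for large `r` and `|y - a_r| = r/2`. -/
theorem beta_psi_inner_pos (N : ℕ) (s p : ℝ)
    (hs : s ∈ Set.Ioo (0 : ℝ) 1) (hN : 2 * s < N)
    (hp : p ∈ Set.Ioo (2 : ℝ) (twoStar N s))
    (ρ : ℝ) (hρ : 0 < ρ) (a : Euc N) (ha : lastCoe N a = 0)
    (ξ η : ℝ → ℝ) (hξ : IsXiCutoff ρ ξ) (hη : IsEtaCutoff η)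
    (φ : Euc N → ℝ) (hφ : isMinimizer N s p φ)
    (hpos : ∀ x, 0 < φ x) (hcont : Continuous φ)
    (U : ℝ → ℝ) (hrad : ∀ x, φ x = U ‖x‖)
    (hmono : ∀ t₁ t₂ : ℝ, 0 ≤ t₁ → t₁ ≤ t₂ → U t₂ ≤ U t₁) :
    ∃ r₃ > (0 : ℝ), ∀ r ≥ r₃, ∀ y : Euc N, ‖y - (a + r • eVecN N)‖ = r / 2 →
      0 < ⟪betaMap N (psiFun N p ξ η (a + r • eVecN N) φ y), y⟫ :=
  beta_psi_inner_pos_general N s p hs hN hp ρ a ha ξ η hξ hη φ hφ hpos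

end
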